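/- arXiv:2201.08521 — 3 statements merged into one kernel-verified Lean document; each statement's English description precedes it below -/
import Mathlib

section
/- Let K be a point set of type (a,b,c)_{n-1} in PG(n,q) with a ≡ b ≡ c ≡ θ_{n-1} ≡ α (mod β), where α and β are coprime positive integers. Then k ≡ θ_n (mod β). -/
/-! Double count the incident pairs (point of `K`, hyperplane). A hyperplane containing a
subspace `X` is a point of the dual projective space lying in the annihilator of `X`, so there
are `θ_n` hyperplanes and `θ_{n-1}` of them pass through each point. Hence
`k θ_{n-1} = ∑_H |K ∩ H| ≡ θ_n α (mod β)`, and since `θ_{n-1} ≡ α` with `α` a unit mod `β`,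
`k ≡ θ_n (mod β)`. -/

open Module Set

noncomputable section

variable (F : Type) [Field F]

/-- The point set of `PG(n,q)`: the projectivization of `GF(q)^{n+1}`. -/
abbrev PGPoint (n : ℕ) := Projectivization F (Fin (n + 1) → F)

/-- The set of points of the projective space lying in (the projectivization of)
a linear subspace `W`. A `d`-dimensional projective subspace corresponds to a
submodule `W` with `finrank F W = d + 1`; hyperplanes correspond to `finrank F W = n`. -/
def projSet (n : ℕ) (W : Submodule F (Fin (n + 1) → F)) : Set (PGPoint F n) :=
  {x | x.submodule ≤ W}

/-- `θ_m = (q^{m+1} - 1)/(q - 1)`, the number of points of `PG(m,q)`. -/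
def theta (q m : ℕ) : ℕ := (q ^ (m + 1) - 1) / (q - 1)

/-- `K` is of type `(a,b,c)_{n-1}`: every hyperplane meets `K` in `a`, `b` or `c`
points, and each of the three values is attained by some hyperplane. -/
def IsType3 (n : ℕ) (K : Set (PGPoint F n)) (a b c : ℕ) : Prop :=
  (∀ W : Submodule F (Fin (n + 1) → F), finrank F W = n →
      (K ∩ projSet F n W).ncard = a ∨ (K ∩ projSet F n W).ncard = b ∨
        (K ∩ projSet F n W).ncard = c) ∧
  (∃ W : Submodule F (Fin (n + 1) → F), finrank F W = n ∧ (K ∩ projSet F n W).ncard = a) ∧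
  (∃ W : Submodule F (Fin (n + 1) → F), finrank F W = n ∧ (K ∩ projSet F n W).ncard = b) ∧
  (∃ W : Submodule F (Fin (n + 1) → F), finrank F W = n ∧ (K ∩ projSet F n W).ncard = c)

/-- `tnum K m`: the number of hyperplanes meeting `K` in exactly `m` points. -/
def tnum (n : ℕ) (K : Set (PGPoint F n)) (m : ℕ) : ℕ :=
  {W : Submodule F (Fin (n + 1) → F) | finrank F W = n ∧ (K ∩ projSet F n W).ncard = m}.ncard

open Finset
open scoped LinearAlgebra.Projectivization

namespace Projectivization

variable {k V : Type*} [Field k] [AddCommGroup V] [Module k V]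

theorem card_lines_le [Finite k] (U : Submodule k V) :
    Nat.card {L : Submodule k V // L ≤ U ∧ finrank k L = 1} =
      ∑ i ∈ range (finrank k U), Nat.card k ^ i := by
  rw [← card_of_finrank k U rfl]
  refine Nat.card_congr ?_
  exact ((Equiv.subtypeSubtypeEquivSubtypeInter (· ≤ U) (finrank k · = 1)).symm.trans
    ((Submodule.MapSubtype.orderIso U).toEquiv.subtypeEquiv fun L => by
      rw [← Submodule.finrank_map_subtype_eq U L]; rfl).symm).trans (equivSubmodule k U).symm

end Projectivization

namespace Subspace

variable {k V : Type*} [Field k] [AddCommGroup V] [Module k V] [FiniteDimensional k V]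

theorem card_hyperplanes_ge [Finite k] {n : ℕ} (hV : finrank k V = n + 1) (X : Subspace k V) :
    Nat.card {W : Subspace k V // X ≤ W ∧ finrank k W = n} =
      ∑ i ∈ range (n + 1 - finrank k X), Nat.card k ^ i := by
  have hX := finrank_add_finrank_dualAnnihilator_eq X
  rw [hV] at hX
  rw [show n + 1 - finrank k X = finrank k X.dualAnnihilator by omega,
    ← Projectivization.card_lines_le]
  let e := (orderIsoFiniteDimensional (K := k) (V := V)).toEquiv.trans OrderDual.ofDual
  refine Nat.card_congr (e.subtypeEquiv fun W => ?_)
  have hW := finrank_add_finrank_dualAnnihilator_eq W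
  rw [hV] at hW
  change X ≤ W ∧ finrank k W = n ↔
    W.dualAnnihilator ≤ X.dualAnnihilator ∧ finrank k W.dualAnnihilator = 1
  rw [dualAnnihilator_le_dualAnnihilator_iff]
  exact and_congr_right' (by omega)

end Subspace

namespace Projectivization

variable {k V : Type*} [Field k] [AddCommGroup V] [Module k V] [FiniteDimensional k V] [Finite k]

theorem sum_ncard_inter_hyperplanes {n : ℕ} (hV : finrank k V = n + 1) (K : Set (ℙ k V))
    (H : Finset (Submodule k V)) (hH : ∀ W, W ∈ H ↔ finrank k W = n) :
    ∑ W ∈ H, (K ∩ {x | x.submodule ≤ W}).ncard = K.ncard * ∑ i ∈ range n, Nat.card k ^ i := by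
  classical
  have : Finite V := Module.finite_of_finite k
  set r : ℙ k V → Submodule k V → Prop := fun x W => x.submodule ≤ W
  set Kf := (Set.toFinite K).toFinset
  have hmeet : ∀ W, (K ∩ {x | x.submodule ≤ W}).ncard = #(Kf.bipartiteBelow r W) := by
    intro W
    rw [← Set.ncard_coe_finset]
    congr 1
    ext x
    simp [Kf, r]
  have hthrough : ∀ x : ℙ k V, #(H.bipartiteAbove r x) = ∑ i ∈ range n, Nat.card k ^ i := by
    intro x
    have h := Subspace.card_hyperplanes_ge hV x.submodule
    rw [x.finrank_submodule, Nat.add_sub_cancel] at h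
    rw [← h, ← Nat.card_eq_finsetCard]
    exact Nat.card_congr (Equiv.subtypeEquivRight fun W => by simp [r, hH, and_comm])
  calc ∑ W ∈ H, (K ∩ {x | x.submodule ≤ W}).ncard
      = ∑ W ∈ H, #(Kf.bipartiteBelow r W) := sum_congr rfl fun W _ => hmeet W
    _ = ∑ x ∈ Kf, #(H.bipartiteAbove r x) :=
      (sum_card_bipartiteAbove_eq_sum_card_bipartiteBelow r).symm
    _ = K.ncard * ∑ i ∈ range n, Nat.card k ^ i := by
      rw [sum_congr rfl fun x _ => hthrough x, sum_const, smul_eq_mul,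
        Set.ncard_eq_toFinset_card K]

end Projectivization

theorem theta_eq_sum_range_pow {q : ℕ} (hq : 2 ≤ q) (m : ℕ) :
    theta q m = ∑ i ∈ Finset.range (m + 1), q ^ i :=
  (Nat.geomSum_eq hq _).symm

theorem modEq_theta_of_mul_sum_range_pow_modEq {q n k α β : ℕ} (hq : 2 ≤ q)
    (hcop : Nat.Coprime α β) (hθ : theta q (n - 1) ≡ α [MOD β])
    (h : k * ∑ i ∈ Finset.range n, q ^ i ≡ theta q n * α [MOD β]) :
    k ≡ theta q n [MOD β] := by
  cases n with
  | zero =>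
    -- no hyperplane of `PG(0,q)` contains a point, and `theta q (0 - 1)` is a junk value
    have hα : 0 ≡ α [MOD β] := by
      simpa [theta_eq_sum_range_pow hq] using h
    rw [hcop.symm.eq_one_of_dvd (Nat.modEq_zero_iff_dvd.1 hα.symm)]
    exact Nat.modEq_one
  | succ n =>
    rw [Nat.add_sub_cancel, theta_eq_sum_range_pow hq] at hθ
    refine Nat.ModEq.cancel_right_of_coprime (Nat.coprime_comm.1 hcop) ?_
    exact (hθ.mul_left k).symm.trans h

theorem statement0 [Fintype F] (q n a b c α β : ℕ) (hq : Fintype.card F = q)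
    (K : Set (PGPoint F n)) (hK : IsType3 F n K a b c)
    (hcop : Nat.Coprime α β)
    (ha : a ≡ α [MOD β]) (hb : b ≡ α [MOD β]) (hc : c ≡ α [MOD β])
    (hθ : theta q (n - 1) ≡ α [MOD β]) :
    K.ncard ≡ theta q n [MOD β] := by
  have hq2 : 2 ≤ q := hq ▸ Fintype.one_lt_card
  rw [← Nat.card_eq_fintype_card] at hq
  have hV := Module.finrank_fin_fun F (n := n + 1)
  let H := (Set.toFinite {W : Submodule F (Fin (n + 1) → F) | finrank F W = n}).toFinset
  have hH : ∀ W, W ∈ H ↔ finrank F W = n := fun W => Set.Finite.mem_toFinset _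
  have hHcard : #H = theta q n := by
    have h := Subspace.card_hyperplanes_ge hV ⊥
    rw [finrank_bot, Nat.sub_zero, hq, ← theta_eq_sum_range_pow hq2] at h
    rw [← h, ← Nat.card_eq_finsetCard]
    exact Nat.card_congr (Equiv.subtypeEquivRight fun W => by simp [hH])
  have hsum : ∑ W ∈ H, (K ∩ projSet F n W).ncard ≡ theta q n * α [MOD β] := by
    rw [← hHcard, ← smul_eq_mul, ← Finset.sum_const]
    refine Nat.ModEq.sum fun W hW => ?_
    rcases hK.1 W ((hH W).1 hW) with h | h | h <;> rw [h] <;> assumption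
  have hcount : ∑ W ∈ H, (K ∩ projSet F n W).ncard = _ :=
    Projectivization.sum_ncard_inter_hyperplanes hV K H hH
  rw [hcount, hq] at hsum
  exact modEq_theta_of_mul_sum_range_pow_modEq hq2 hcop hθ hsum

end
end

section
/- Let P be a point of PG(n,q) and let K be a set of points of PG(n,q) such that there is a fixed number t with |K ∩ H| = t for every hyperplane H of PG(n,q) not containing P. Then K ∪ {P} is a cone with vertex P, i.e. for every point Q ∈ K ∪ {P}, every point of the line PQ lies in K ∪ {P}. -/
open Module Set

noncomputable section

variable (F : Type) [Field F]

/-! Fix a representative `p` of `P` and a point `y ≠ P`, and count the pairs `(φ, R)` with `R ∈ K`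
and `φ` a linear form with `φ p = 1` and `φ y = φ R = 0`. There are `q^{d-2}` forms with
`φ p = 1`, `φ y = 0` (where `d = dim V`), each kernel a hyperplane missing `P`, so there are
`t q^{d-2}` pairs. Counting by `R` instead, `R = y` contributes `q^{d-2}`, the other points of the
line `Py` contribute nothing, and each point of `K` off that line contributes `q^{d-3}`. Hence
whether `y ∈ K` depends only on the line `Py`, which is the cone property. -/

open scoped LinearAlgebra.Projectivization

namespace Projectivization

variable {k V : Type*} [Field k] [AddCommGroup V] [Module k V]

theorem submodule_le_iff_rep_mem {x : ℙ k V} {W : Submodule k V} :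
    x.submodule ≤ W ↔ x.rep ∈ W := by
  rw [submodule_eq, Submodule.span_singleton_le_iff_mem]

theorem rep_mem_span_singleton_rep_iff {x y : ℙ k V} : x.rep ∈ k ∙ y.rep ↔ x = y := by
  rw [Submodule.mem_span_singleton, ← mk_eq_mk_iff' k _ _ x.rep_nonzero y.rep_nonzero, mk_rep,
    mk_rep]

theorem submodule_le_submodule_iff {x y : ℙ k V} : x.submodule ≤ y.submodule ↔ x = y := by
  rw [submodule_le_iff_rep_mem, submodule_eq y, rep_mem_span_singleton_rep_iff]

theorem sup_submodule_eq_of_le_sup {P Q x : ℙ k V} (hxP : x ≠ P)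
    (hx : x.submodule ≤ P.submodule ⊔ Q.submodule) :
    P.submodule ⊔ x.submodule = P.submodule ⊔ Q.submodule := by
  refine le_antisymm (sup_le le_sup_left hx) (sup_le le_sup_left ?_)
  rw [submodule_le_iff_rep_mem, submodule_eq P, submodule_eq Q, sup_comm,
    ← Submodule.span_insert] at hx
  have hQ := mem_span_insert_exchange hx (rep_mem_span_singleton_rep_iff.not.2 hxP)
  rwa [Submodule.span_insert, sup_comm, ← submodule_eq, ← submodule_eq,
    ← submodule_le_iff_rep_mem] at hQ

end Projectivization

section DualCount

variable {k V : Type*} [Field k] [AddCommGroup V] [Module k V]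

theorem LinearIndependent.surjective_pi_dualEval {ι : Type*} [Fintype ι] {u : ι → V}
    (hu : LinearIndependent k u) :
    Function.Surjective (LinearMap.pi fun i => Dual.eval k V (u i)) := by
  classical
  intro c
  obtain ⟨φ, hφ⟩ := LinearMap.dualMap_surjective_of_injective
    hu.fintypeLinearCombination_injective (Fintype.linearCombination k c)
  refine ⟨φ, funext fun i => ?_⟩
  simpa using congr($hφ (Pi.single i 1))

theorem LinearMap.natCard_preimage_singleton_of_surjective [Finite k] {M N : Type*}
    [AddCommGroup M] [Module k M] [AddCommGroup N] [Module k N] [Module.Finite k M]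
    {f : M →ₗ[k] N} (hf : Function.Surjective f) (y : N) :
    Nat.card (f ⁻¹' {y}) = Nat.card k ^ (finrank k M - finrank k N) := by
  have hrank := f.finrank_range_add_finrank_ker
  rw [LinearMap.range_eq_top.2 hf, finrank_top] at hrank
  rw [show finrank k M - finrank k N = finrank k (LinearMap.ker f) by omega,
    ← Module.natCard_eq_pow_finrank]
  exact Nat.card_congr (AddMonoidHom.fiberEquivKerOfSurjective (f := f.toAddMonoidHom) hf y)

theorem LinearIndependent.ncard_dual_apply_eq [Finite k] [FiniteDimensional k V] {ι : Type*}
    [Fintype ι] {u : ι → V} (hu : LinearIndependent k u) (c : ι → k) :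
    {φ : Dual k V | ∀ i, φ (u i) = c i}.ncard = Nat.card k ^ (finrank k V - Fintype.card ι) := by
  have h := LinearMap.natCard_preimage_singleton_of_surjective hu.surjective_pi_dualEval c
  rw [Subspace.dual_finrank_eq, Module.finrank_fintype_fun_eq_card] at h
  rw [← h, ← Nat.card_coe_set_eq]
  congr
  ext φ
  simp [funext_iff]

end DualCount

namespace Projectivization

variable {k V : Type*} [Field k] [Finite k] [AddCommGroup V] [Module k V] [FiniteDimensional k V]

theorem ncard_dual_normalized_vanishing {P y : ℙ k V} (hy : y ≠ P) :
    {φ : Dual k V | φ P.rep = 1 ∧ φ y.rep = 0}.ncard = Nat.card k ^ (finrank k V - 2) := by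
  simpa [Fin.forall_fin_two] using
    (linearIndependent_pair_iff_ne.2 hy.symm).ncard_dual_apply_eq ![1, 0]

open scoped Classical in
theorem ncard_dual_normalized_vanishing_two {P y R : ℙ k V} (hy : y ≠ P) :
    {φ : Dual k V | φ P.rep = 1 ∧ φ y.rep = 0 ∧ φ R.rep = 0}.ncard =
      if R = y then Nat.card k ^ (finrank k V - 2)
      else if R.submodule ≤ P.submodule ⊔ y.submodule then 0
      else Nat.card k ^ (finrank k V - 3) := by
  split_ifs with hRy hRl
  · subst hRy
    simpa using ncard_dual_normalized_vanishing hy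
  · convert Set.ncard_empty (Dual k V)
    refine Set.eq_empty_of_forall_notMem fun φ ⟨hP, hy0, hR⟩ => ?_
    have hPker : P.submodule ≤ LinearMap.ker φ :=
      calc P.submodule ≤ y.submodule ⊔ P.submodule := le_sup_right
        _ = y.submodule ⊔ R.submodule :=
          (sup_submodule_eq_of_le_sup hRy (sup_comm P.submodule _ ▸ hRl)).symm
        _ ≤ LinearMap.ker φ :=
          sup_le (submodule_le_iff_rep_mem.2 hy0) (submodule_le_iff_rep_mem.2 hR)
    exact one_ne_zero (hP.symm.trans (LinearMap.mem_ker.1 (submodule_le_iff_rep_mem.1 hPker)))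
  · have hR : R.rep ∉ Submodule.span k (Set.range ![P.rep, y.rep]) := by
      rwa [Matrix.range_cons_cons_empty, Submodule.span_insert, ← submodule_eq, ← submodule_eq,
        ← submodule_le_iff_rep_mem]
    have h := ((linearIndependent_pair_iff_ne.2 hy.symm).finCons hR).ncard_dual_apply_eq ![0, 1, 0]
    rw [Fintype.card_fin] at h
    rw [← h]
    congr
    ext φ
    simp [Fin.forall_fin_succ]
    tauto

/- When `finrank k V ≤ 2` no point lies off the line, so the truncated exponents are harmless. -/
open Finset in
open scoped Classical in
theorem mul_pow_eq_of_ncard_inter_ker_eq (P : ℙ k V) (K : Set (ℙ k V)) (t : ℕ)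
    (hK : ∀ φ : Dual k V, φ P.rep = 1 → (K ∩ {R | φ R.rep = 0}).ncard = t)
    {y : ℙ k V} (hy : y ≠ P) :
    t * Nat.card k ^ (finrank k V - 2) =
      (if y ∈ K then Nat.card k ^ (finrank k V - 2) else 0) +
        (K \ {R | R.submodule ≤ P.submodule ⊔ y.submodule}).ncard *
          Nat.card k ^ (finrank k V - 3) := by
  have : Fintype (Dual k V) := @Fintype.ofFinite _ (Module.finite_of_finite k)
  have : Finite V := Module.finite_of_finite k
  have : Fintype (ℙ k V) := Fintype.ofFinite _
  let D : Finset (Dual k V) := {φ | φ P.rep = 1 ∧ φ y.rep = 0}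
  let KF : Finset (ℙ k V) := {R | R ∈ K}
  let r : Dual k V → ℙ k V → Prop := fun φ R => φ R.rep = 0
  have hdouble := sum_card_bipartiteAbove_eq_sum_card_bipartiteBelow (s := D) (t := KF) (r := r)
  have hbyφ (φ) (hφ : φ ∈ D) : #(KF.bipartiteAbove r φ) = t := by
    rw [← hK φ (mem_filter.1 hφ).2.1, ← Set.ncard_coe_finset]
    congr
    ext R
    simp [bipartiteAbove, KF, r]
  have hbyR (R) : #(D.bipartiteBelow r R) =
      (if R = y then Nat.card k ^ (finrank k V - 2) else 0) +
        if R.submodule ≤ P.submodule ⊔ y.submodule then 0 else Nat.card k ^ (finrank k V - 3) := by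
    rw [← Set.ncard_coe_finset]
    convert ncard_dual_normalized_vanishing_two (R := R) hy using 2
    · ext φ
      simp [bipartiteBelow, D, r, and_assoc]
    · by_cases hRy : R = y <;> simp [hRy]
  have hD : #D = Nat.card k ^ (finrank k V - 2) := by
    rw [← ncard_dual_normalized_vanishing hy, ← Set.ncard_coe_finset]
    simp [D]
  have hoff : #{R ∈ KF | ¬R.submodule ≤ P.submodule ⊔ y.submodule} =
      (K \ {R | R.submodule ≤ P.submodule ⊔ y.submodule}).ncard := by
    rw [← Set.ncard_coe_finset]
    congr
    ext R
    simp [KF]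
  rw [sum_congr rfl hbyφ, sum_congr rfl fun R _ => hbyR R, sum_add_distrib, sum_ite_eq', sum_ite,
    sum_const_zero, sum_const, sum_const, zero_add, smul_eq_mul, smul_eq_mul, hD, hoff,
    mul_comm] at hdouble
  simpa [KF] using hdouble

theorem mem_union_singleton_of_le_sup (P : ℙ k V) (K : Set (ℙ k V)) (t : ℕ)
    (hK : ∀ φ : Dual k V, φ P.rep = 1 → (K ∩ {R | φ R.rep = 0}).ncard = t)
    {Q x : ℙ k V} (hQ : Q ∈ K ∪ {P}) (hx : x.submodule ≤ P.submodule ⊔ Q.submodule) :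
    x ∈ K ∪ {P} := by
  by_cases hxP : x = P
  · exact Or.inr hxP
  have hQP : Q ≠ P := by
    rintro rfl
    rw [sup_idem] at hx
    exact hxP (submodule_le_submodule_iff.1 hx)
  have hQK : Q ∈ K := hQ.resolve_right hQP
  have hcountQ := mul_pow_eq_of_ncard_inter_ker_eq P K t hK hQP
  have hcountx := mul_pow_eq_of_ncard_inter_ker_eq P K t hK hxP
  rw [if_pos hQK] at hcountQ
  rw [sup_submodule_eq_of_le_sup hxP hx] at hcountx
  have hpos : 0 < Nat.card k ^ (finrank k V - 2) := pow_pos Nat.card_pos _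
  refine Or.inl (by_contra fun hxK => ?_)
  rw [if_neg hxK] at hcountx
  omega

end Projectivization

theorem projSet_ker (n : ℕ) (φ : Dual F (Fin (n + 1) → F)) :
    projSet F n (LinearMap.ker φ) = {R | φ R.rep = 0} := by
  ext R
  simp [projSet, Projectivization.submodule_le_iff_rep_mem]

theorem statement8 [Fintype F] (n t : ℕ)
    (P : PGPoint F n) (K : Set (PGPoint F n))
    (hconst : ∀ W : Submodule F (Fin (n + 1) → F), finrank F W = n →
      ¬ P.submodule ≤ W → (K ∩ projSet F n W).ncard = t) :
    ∀ Q ∈ K ∪ {P}, ∀ x : PGPoint F n,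
      x.submodule ≤ P.submodule ⊔ Q.submodule → x ∈ K ∪ {P} := by
  refine fun Q hQ x hx => Projectivization.mem_union_singleton_of_le_sup P K t
    (fun φ hφ => ?_) hQ hx
  have hφ0 : φ ≠ 0 := by
    rintro rfl
    exact zero_ne_one hφ
  rw [← projSet_ker, hconst]
  · simpa using Module.Dual.finrank_ker_add_one_of_ne_zero hφ0
  · rw [Projectivization.submodule_le_iff_rep_mem, LinearMap.mem_ker, hφ]
    exact one_ne_zero
end
end

section
/- In PG(3,q), let K be a point set of type (1, q+2, 2q+1)_2 with k points. Then (q+1) divides k, and q divides k−1 or q divides k−2. -/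
open Module Set

noncomputable section

variable (F : Type) [Field F]

/-! Let `t₁, t₂, t₃` be the numbers of planes meeting `K` in `1`, `q + 2`, `2q + 1` points.
By duality, a projective subspace of vector dimension `d` of `PG(n, q)` lies in
`1 + q + ⋯ + q^(n - d)` hyperplanes, so double counting incidences of the planes with the points
of `K` and with the ordered pairs of distinct points of `K` gives the standard equations
`t₁ + t₂ + t₃ = q³ + q² + q + 1`, `t₁ + (q + 2)t₂ + (2q + 1)t₃ = k(q² + q + 1)` and
`(q + 2)(q + 1)t₂ + (2q + 1)2q t₃ = k(k - 1)(q + 1)`.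
Reducing them modulo `q + 1` gives `q + 1 ∣ k`, and modulo `q` gives `q ∣ (k - 1)(k - 2)`;
as `q` is a prime power and `k - 1`, `k - 2` are coprime, `q` divides one of them. -/

open Finset
open scoped LinearAlgebra.Projectivization

section Duality

variable {K V : Type*} [Field K] [Finite K] [AddCommGroup V] [Module K V]

theorem Submodule.card_le_finrank_eq_one (A : Submodule K V) :
    Nat.card {Φ : Submodule K V // Φ ≤ A ∧ finrank K Φ = 1} =
      ∑ i ∈ Finset.range (finrank K A), Nat.card K ^ i := by
  let e : {H : Submodule K A // finrank K H = 1} ≃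
      {Φ : Submodule K V // Φ ≤ A ∧ finrank K Φ = 1} :=
    ((Submodule.MapSubtype.orderIso A).toEquiv.subtypeEquiv
      (q := fun Φ => finrank K Φ.1 = 1) fun H => by
        change _ ↔ finrank K (H.map A.subtype) = 1
        rw [Submodule.finrank_map_subtype_eq]).trans
      (Equiv.subtypeSubtypeEquivSubtypeInter (· ≤ A) (finrank K · = 1))
  rw [← Nat.card_congr e, ← Nat.card_congr (Projectivization.equivSubmodule K A),
    Projectivization.card_of_finrank K A rfl]

theorem Submodule.card_hyperplanes_ge [FiniteDimensional K V] (U : Submodule K V) :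
    Nat.card {W : Submodule K V // U ≤ W ∧ finrank K W + 1 = finrank K V} =
      ∑ i ∈ Finset.range (finrank K V - finrank K U), Nat.card K ^ i := by
  have hdim (W : Submodule K V) : finrank K W.dualAnnihilator = finrank K V - finrank K W := by
    have := Subspace.finrank_add_finrank_dualAnnihilator_eq W
    omega
  let e : {W : Submodule K V // U ≤ W ∧ finrank K W + 1 = finrank K V} ≃
      {Φ : Submodule K (Dual K V) // Φ ≤ U.dualAnnihilator ∧ finrank K Φ = 1} :=
    (Subspace.orderIsoFiniteDimensional (K := K) (V := V)).toEquiv.trans OrderDual.ofDual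
      |>.subtypeEquiv fun W => by
        have := Submodule.finrank_le W
        change _ ↔ W.dualAnnihilator ≤ U.dualAnnihilator ∧ finrank K W.dualAnnihilator = 1
        rw [Subspace.dualAnnihilator_le_dualAnnihilator_iff, hdim]
        exact and_congr_right fun _ => by omega
  rw [Nat.card_congr e, Submodule.card_le_finrank_eq_one, hdim]

end Duality

theorem Projectivization.finrank_sup_submodule {K V : Type*} [Field K] [AddCommGroup V]
    [Module K V] [FiniteDimensional K V] {x y : ℙ K V} (hxy : x ≠ y) :
    finrank K ↥(x.submodule ⊔ y.submodule) = 2 := by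
  have hlt : x.submodule ⊓ y.submodule < x.submodule :=
    inf_le_left.lt_of_ne fun h => hxy <| submodule_injective <|
      Submodule.eq_of_le_of_finrank_eq (inf_eq_left.mp h) (by simp [finrank_submodule])
  have h₁ := Submodule.finrank_lt_finrank_of_lt hlt
  have h₂ := Submodule.finrank_sup_add_finrank_inf_eq x.submodule y.submodule
  simp only [finrank_submodule] at h₁ h₂
  omega

theorem Finset.offDiag_card_intCast {α : Type*} (s : Finset α) :
    (#s.offDiag : ℤ) = #s * (#s - 1) := by
  rw [offDiag_card, Nat.cast_sub (Nat.le_mul_self _)]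
  push_cast
  ring

section ProjectiveSpace

variable {F} [Finite F] {n : ℕ}

variable (F n) in
def hyperplanes : Finset (Submodule F (Fin (n + 1) → F)) :=
  (Set.toFinite {W : Submodule F (Fin (n + 1) → F) | finrank F W = n}).toFinset

open scoped Classical in
theorem card_filter_hyperplanes_ge (U : Submodule F (Fin (n + 1) → F)) :
    #{W ∈ hyperplanes F n | U ≤ W} = ∑ i ∈ Finset.range (n + 1 - finrank F U), Nat.card F ^ i := by
  have h := Submodule.card_hyperplanes_ge U
  rw [finrank_fin_fun] at h
  rw [← h, ← Set.ncard_coe_finset, ← Nat.card_coe_set_eq]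
  exact Nat.card_congr <| Equiv.subtypeEquivRight fun W => by simp [hyperplanes, and_comm]

theorem card_hyperplanes : #(hyperplanes F n) = ∑ i ∈ Finset.range (n + 1), Nat.card F ^ i := by
  simpa using card_filter_hyperplanes_ge (F := F) (n := n) ⊥

open scoped Classical in
theorem ncard_inter_projSet (K : Set (PGPoint F n)) (W : Submodule F (Fin (n + 1) → F)) :
    (K ∩ projSet F n W).ncard = #{x ∈ (Set.toFinite K).toFinset | x.submodule ≤ W} := by
  rw [← Set.ncard_coe_finset]
  congr
  ext x
  simp [projSet]

theorem sum_ncard_inter_projSet (K : Set (PGPoint F n)) :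
    ∑ W ∈ hyperplanes F n, (K ∩ projSet F n W).ncard =
      K.ncard * ∑ i ∈ Finset.range n, Nat.card F ^ i := by
  classical
  simp_rw [ncard_inter_projSet, ← bipartiteBelow.eq_def,
    ← sum_card_bipartiteAbove_eq_sum_card_bipartiteBelow, bipartiteAbove,
    card_filter_hyperplanes_ge, Projectivization.finrank_submodule, Nat.add_sub_cancel,
    sum_const, smul_eq_mul, Set.ncard_eq_toFinset_card K]

theorem sum_ncard_inter_projSet_mul_pred (K : Set (PGPoint F n)) :
    ∑ W ∈ hyperplanes F n, ((K ∩ projSet F n W).ncard : ℤ) * ((K ∩ projSet F n W).ncard - 1) =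
      K.ncard * (K.ncard - 1) * ∑ i ∈ Finset.range (n - 1), (Nat.card F : ℤ) ^ i := by
  classical
  set Kf := (Set.toFinite K).toFinset
  have hpairs : ∑ W ∈ hyperplanes F n,
      #{p ∈ Kf.offDiag | p.1.submodule ≤ W ∧ p.2.submodule ≤ W} =
        #Kf.offDiag * ∑ i ∈ Finset.range (n - 1), Nat.card F ^ i := by
    have h := sum_card_bipartiteAbove_eq_sum_card_bipartiteBelow
      (fun (p : PGPoint F n × PGPoint F n) W => p.1.submodule ≤ W ∧ p.2.submodule ≤ W)
      (s := Kf.offDiag) (t := hyperplanes F n)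
    simp only [bipartiteAbove, bipartiteBelow] at h
    rw [← h, card_eq_sum_ones, sum_mul]
    refine sum_congr rfl fun p hp => ?_
    simp_rw [← sup_le_iff, card_filter_hyperplanes_ge]
    rw [Projectivization.finrank_sup_submodule (Finset.mem_offDiag.mp hp).2.2, one_mul]
    rfl
  have hterm (W : Submodule F (Fin (n + 1) → F)) :
      ((K ∩ projSet F n W).ncard : ℤ) * ((K ∩ projSet F n W).ncard - 1) =
        #{p ∈ Kf.offDiag | p.1.submodule ≤ W ∧ p.2.submodule ≤ W} := by
    rw [ncard_inter_projSet, ← offDiag_card_intCast, Nat.cast_inj]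
    congr 1
    ext p
    simp only [mem_filter, Finset.mem_offDiag]
    tauto
  rw [sum_congr rfl fun W _ => hterm W, Set.ncard_eq_toFinset_card K, ← offDiag_card_intCast]
  exact_mod_cast hpairs

theorem tnum_eq_card_filter (K : Set (PGPoint F n)) (m : ℕ) :
    tnum F n K m = #{W ∈ hyperplanes F n | (K ∩ projSet F n W).ncard = m} := by
  rw [tnum, ← Set.ncard_coe_finset]
  congr
  ext W
  simp [hyperplanes]

theorem IsType3.sum_eq {M : Type*} [AddCommMonoid M] {K : Set (PGPoint F n)} {a b c : ℕ}
    (hK : IsType3 F n K a b c) (hab : a ≠ b) (hac : a ≠ c) (hbc : b ≠ c) (g : ℕ → M) :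
    ∑ W ∈ hyperplanes F n, g (K ∩ projSet F n W).ncard =
      tnum F n K a • g a + tnum F n K b • g b + tnum F n K c • g c := by
  have hmaps (W) (hW : W ∈ hyperplanes F n) :
      (K ∩ projSet F n W).ncard ∈ ({a, b, c} : Finset ℕ) := by
    simpa using hK.1 W (by simpa [hyperplanes] using hW)
  have hfiber (m : ℕ) : ∑ W ∈ hyperplanes F n with (K ∩ projSet F n W).ncard = m,
      g (K ∩ projSet F n W).ncard = tnum F n K m • g m := by
    rw [sum_congr rfl fun W hW => by rw [(mem_filter.mp hW).2], sum_const, tnum_eq_card_filter]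
  rw [← sum_fiberwise_of_maps_to hmaps, sum_insert (by simp [hab, hac]),
    sum_insert (by simp [hbc]), sum_singleton, hfiber, hfiber, hfiber, add_assoc]

end ProjectiveSpace

theorem Int.add_one_dvd_and_dvd_sub_one_mul_sub_two {q k t₁ t₂ t₃ : ℤ}
    (h₀ : t₁ + t₂ + t₃ = q ^ 3 + q ^ 2 + q + 1)
    (h₁ : t₁ + (q + 2) * t₂ + (2 * q + 1) * t₃ = k * (q ^ 2 + q + 1))
    (h₂ : (q + 2) * (q + 1) * t₂ + (2 * q + 1) * (2 * q) * t₃ = k * (k - 1) * (q + 1)) :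
    q + 1 ∣ k ∧ q ∣ (k - 1) * (k - 2) := by
  -- Modulo `q + 1` the equations read `2t₃ ≡ 0` and `k + 2t₃ ≡ 0`;
  -- modulo `q` they read `t₂ ≡ k - 1` and `2t₂ ≡ k(k - 1)`.
  constructor
  · exact ⟨(q + 3) * t₂ + 4 * q * t₃ + q ^ 2 + 1 - k * (k + q - 1),
      by linear_combination h₀ - h₁ - h₂⟩
  · exact ⟨(q + 1) * t₂ + (4 * q - 2) * t₃ - 2 * (q ^ 2 + q + 1) - k * (k - 2 * q - 3),
      by linear_combination -h₂ - 2 * (h₀ - h₁)⟩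

theorem IsPrimePow.intCast_dvd_or_dvd_of_dvd_mul {q : ℕ} (hq : IsPrimePow q) {a b : ℤ}
    (hab : IsCoprime a b) (h : (q : ℤ) ∣ a * b) : (q : ℤ) ∣ a ∨ (q : ℤ) ∣ b := by
  rw [Int.isCoprime_iff_gcd_eq_one] at hab
  simp only [Int.natCast_dvd, Int.natAbs_mul] at h ⊢
  exact (Nat.Coprime.isPrimePow_dvd_mul hab hq).mp h

/-- In `PG(3,q)`, if `K` is of type `(1, q+2, 2q+1)_2` with `k` points,
then `q+1` divides `k`, and `q` divides `k-1` or `q` divides `k-2`. -/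
theorem statement13 [Fintype F] (q : ℕ) (hq : Fintype.card F = q)
    (K : Set (PGPoint F 3)) (hK : IsType3 F 3 K 1 (q + 2) (2 * q + 1)) :
    (q + 1) ∣ K.ncard ∧
      ((q : ℤ) ∣ (K.ncard : ℤ) - 1 ∨ (q : ℤ) ∣ (K.ncard : ℤ) - 2) := by
  have hq₁ : 1 < q := hq ▸ Fintype.one_lt_card
  have hsum := hK.sum_eq (by omega) (by omega) (by omega) (M := ℤ)
  have h₀ := hsum fun _ => 1
  have h₁ := hsum fun m => m
  have h₂ := hsum fun m => m * (m - 1)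
  rw [sum_const, card_hyperplanes] at h₀
  rw [← Nat.cast_sum, sum_ncard_inter_projSet] at h₁
  rw [sum_ncard_inter_projSet_mul_pred] at h₂
  simp only [Nat.card_eq_fintype_card, hq, sum_range_succ, sum_range_zero, nsmul_eq_mul,
    Nat.cast_add, Nat.cast_one, Nat.cast_pow, Nat.cast_mul, Nat.cast_ofNat] at h₀ h₁ h₂
  obtain ⟨hk, hk'⟩ := Int.add_one_dvd_and_dvd_sub_one_mul_sub_two (q := q) (k := K.ncard)
    (t₁ := tnum F 3 K 1) (t₂ := tnum F 3 K (q + 2)) (t₃ := tnum F 3 K (2 * q + 1))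
    (by linear_combination -h₀) (by linear_combination -h₁) (by linear_combination -h₂)
  exact ⟨by exact_mod_cast hk,
    (hq ▸ FiniteField.isPrimePow_card F).intCast_dvd_or_dvd_of_dvd_mul ⟨1, -1, by ring⟩ hk'⟩
end
end
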